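/- The seven points P₁=(0,0), P₂=(22270,0), P₃=(26127018/2227, (932064/2227)√2002), P₄=(245363/17, (3144/17)√2002), P₅=(17615968/2227, (238464/2227)√2002), P₆=(56068/17, (3144/17)√2002), P₇=(19079044/2227, -(54168/2227)√2002) in ℝ² have pairwise integral distances; in particular dist(P₁,P₂)=22270, dist(P₁,P₃)=22098, dist(P₁,P₄)=16637, dist(P₁,P₅)=9248, dist(P₁,P₆)=8908, dist(P₁,P₇)=8636, dist(P₂,P₃)=21488, dist(P₂,P₄)=11397, dist(P₂,P₅)=15138, dist(P₂,P₆)=20698, dist(P₂,P₇)=13746, dist(P₃,P₄)=10795, dist(P₃,P₅)=14450, dist(P₃,P₆)=13430, dist(P₃,P₇)=20066, dist(P₄,P₅)=7395, dist(P₄,P₆)=11135, dist(P₄,P₇)=11049, dist(P₅,P₆)=5780, dist(P₅,P₇)=5916, dist(P₆,P₇)=10744. -/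

import Mathlib

noncomputable def pt (x y : ℝ) : EuclideanSpace ℝ (Fin 2) := !₂[x, y]

theorem dist_pt (x₁ y₁ x₂ y₂ : ℝ) :
    dist (pt x₁ y₁) (pt x₂ y₂) = √((x₁ - x₂) ^ 2 + (y₁ - y₂) ^ 2) := by
  simp [pt, EuclideanSpace.dist_eq, Fin.sum_univ_two, Real.dist_eq, sq_abs]

theorem dist_pt_eq_of_sq_eq {x₁ y₁ x₂ y₂ r : ℝ} (hr : 0 ≤ r)
    (h : (x₁ - x₂) ^ 2 + (y₁ - y₂) ^ 2 = r ^ 2) : dist (pt x₁ y₁) (pt x₂ y₂) = r := by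
  rw [dist_pt, h, Real.sqrt_sq hr]

/-- The seven points of the first integral heptagon in general position. -/
noncomputable def P : Fin 7 → EuclideanSpace ℝ (Fin 2) :=
  ![pt 0 0,
    pt 22270 0,
    pt (26127018 / 2227) ((932064 / 2227) * Real.sqrt 2002),
    pt (245363 / 17) ((3144 / 17) * Real.sqrt 2002),
    pt (17615968 / 2227) ((238464 / 2227) * Real.sqrt 2002),
    pt (56068 / 17) ((3144 / 17) * Real.sqrt 2002),
    pt (19079044 / 2227) (-(54168 / 2227) * Real.sqrt 2002)]

/-- All pairwise distances of the heptagon are the asserted integers. -/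
theorem heptagon_distances :
    dist (P 0) (P 1) = 22270 ∧ dist (P 0) (P 2) = 22098 ∧ dist (P 0) (P 3) = 16637 ∧
    dist (P 0) (P 4) = 9248 ∧ dist (P 0) (P 5) = 8908 ∧ dist (P 0) (P 6) = 8636 ∧
    dist (P 1) (P 2) = 21488 ∧ dist (P 1) (P 3) = 11397 ∧ dist (P 1) (P 4) = 15138 ∧
    dist (P 1) (P 5) = 20698 ∧ dist (P 1) (P 6) = 13746 ∧
    dist (P 2) (P 3) = 10795 ∧ dist (P 2) (P 4) = 14450 ∧ dist (P 2) (P 5) = 13430 ∧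
    dist (P 2) (P 6) = 20066 ∧
    dist (P 3) (P 4) = 7395 ∧ dist (P 3) (P 5) = 11135 ∧ dist (P 3) (P 6) = 11049 ∧
    dist (P 4) (P 5) = 5780 ∧ dist (P 4) (P 6) = 5916 ∧
    dist (P 5) (P 6) = 10744 := by
  have hs : √2002 ^ 2 = 2002 := Real.sq_sqrt (by norm_num)
  simp only [P, Matrix.cons_val]
  refine ⟨?_, ?_, ?_, ?_, ?_, ?_, ?_, ?_, ?_, ?_, ?_, ?_, ?_, ?_, ?_, ?_, ?_, ?_, ?_, ?_, ?_⟩ <;>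
  · refine dist_pt_eq_of_sq_eq (by norm_num) ?_
    -- every second coordinate is a rational multiple of √2002, so each squared distance is
    -- linear in the atom √2002 ^ 2
    linarith [hs]
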